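/- arXiv:2103.07775 — 3 statements merged into one kernel-verified Lean document; each statement's English description precedes it below -/
import Mathlib

section
/- Let 0 < d < 1 and r > 0. Then for no c ∈ ℝ does there exist a propagation front (in the weak sense of Definition df:front) for the reduced Gatenby–Gawlinski system connecting the infected state (0,1) to the healthy state (1,0). -/
/-!
A front from `(0, 1)` to `(1, 0)` would have to travel with positive speed, and none can.

Positive speed: test the `V`-equation with a plateau `ψ` equal to `1` on an interval `[a, b]` across
which `V` falls from above `1/2` to below `1/2`, with ramps of width `L`. The reaction term gives at
least `∫_a^b r V (1 - V) > 0`, the drift term is `c` times `∫ V ψ' ≥ 0`, and since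
`(1 - U) V' ∈ L²` while `ψ' = O(1/L)` on the ramps, the flux term vanishes as `L → ∞`.

No positive speed: testing the `U`-equation with `e^{μx} ψ` gives
`c ∫ U e^{μx} ψ' = ∫ (1 - U - d V - c μ) U e^{μx} ψ`. Near `-∞`, where `U → 0` and `d < 1`, a small
`μ > 0` keeps the rate `1 - U - d V - c μ` positive, and for a plateau starting at `A` the left-ramp
term is `O(e^{μA})`; letting `A → -∞` gives `U ≡ 0` on a half-line. Then `μ = -2 / c` makes the
rate at least `1` everywhere and the left-ramp term vanishes, so `U ≡ 0`, contradicting `U → 1` at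
`+∞`.
-/

open Filter Topology MeasureTheory

/-- A propagation front in the weak sense (Definition df:front) for the reduced
Gatenby–Gawlinski system, connecting `(Um, Vm)` to `(Up, Vp)`. -/
def IsWeakFront (d r c : ℝ) (U V : ℝ → ℝ) (Um Vm Up Vp : ℝ) : Prop :=
  Continuous U ∧ Continuous V ∧
  (∀ ξ : ℝ, U ξ ∈ Set.Icc (0 : ℝ) 1) ∧ (∀ ξ : ℝ, V ξ ∈ Set.Icc (0 : ℝ) 1) ∧
  Differentiable ℝ V ∧
  MemLp (fun ξ => (1 - U ξ) * deriv V ξ) 2 volume ∧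
  (∀ φ : ℝ → ℝ, ContDiff ℝ 1 φ → HasCompactSupport φ →
    ∫ ξ : ℝ, U ξ * (c * deriv φ ξ - (1 - U ξ - d * V ξ) * φ ξ) = 0) ∧
  (∀ ψ : ℝ → ℝ, ContDiff ℝ 1 ψ → HasCompactSupport ψ →
    ∫ ξ : ℝ, (((1 - U ξ) * deriv V ξ + c * V ξ) * deriv ψ ξ
        - r * V ξ * (1 - V ξ) * ψ ξ) = 0) ∧
  Tendsto U atBot (𝓝 Um) ∧ Tendsto V atBot (𝓝 Vm) ∧
  Tendsto U atTop (𝓝 Up) ∧ Tendsto V atTop (𝓝 Vp)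

open Set Real

namespace Real.smoothTransition

theorem deriv_eq_zero_of_nonpos {x : ℝ} (hx : x ≤ 0) : deriv smoothTransition x = 0 :=
  IsLocalMin.deriv_eq_zero <| Eventually.of_forall fun y => by
    rw [zero_of_nonpos hx]; exact nonneg y

theorem deriv_eq_zero_of_one_le {x : ℝ} (hx : 1 ≤ x) : deriv smoothTransition x = 0 :=
  IsLocalMax.deriv_eq_zero <| Eventually.of_forall fun y => by
    rw [one_of_one_le hx]; exact le_one y

theorem exists_abs_deriv_le : ∃ K, ∀ x, |deriv smoothTransition x| ≤ K := by
  have hsupp : HasCompactSupport (deriv smoothTransition) :=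
    HasCompactSupport.intro isCompact_Icc fun x hx => by
      rcases not_and_or.1 hx with h | h
      · exact deriv_eq_zero_of_nonpos (not_le.1 h).le
      · exact deriv_eq_zero_of_one_le (not_le.1 h).le
  exact (smoothTransition.contDiff (n := 1)).continuous_deriv le_rfl
    |>.bounded_above_of_compact_support hsupp

end Real.smoothTransition

theorem eq_zero_of_intervalIntegral_nonpos {g : ℝ → ℝ} (hg : Continuous g) (hg0 : ∀ x, 0 ≤ g x)
    {p q : ℝ} (hpq : p < q) (hI : ∫ x in p..q, g x ≤ 0) {x : ℝ} (hx : x ∈ Icc p q) : g x = 0 :=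
  le_antisymm (not_lt.1 fun hpos => hI.not_gt <|
    intervalIntegral.integral_pos hpq hg.continuousOn (fun y _ => hg0 y) ⟨x, hx, hpos⟩) (hg0 x)

theorem intervalIntegral_const_mul_le {f w : ℝ → ℝ} {p q θ : ℝ} (hpq : p ≤ q)
    (hf : Continuous f) (hw : Continuous w) (h : ∀ x ∈ Icc p q, θ * w x ≤ f x * w x) :
    θ * ∫ x in p..q, w x ≤ ∫ x in p..q, f x * w x := by
  rw [← intervalIntegral.integral_const_mul]
  exact intervalIntegral.integral_mono_on hpq ((hw.const_mul θ).intervalIntegrable _ _)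
    ((hf.mul hw).intervalIntegrable _ _) h

theorem intervalIntegral_le_const_mul {f w : ℝ → ℝ} {p q θ : ℝ} (hpq : p ≤ q)
    (hf : Continuous f) (hw : Continuous w) (h : ∀ x ∈ Icc p q, f x * w x ≤ θ * w x) :
    ∫ x in p..q, f x * w x ≤ θ * ∫ x in p..q, w x := by
  rw [← intervalIntegral.integral_const_mul]
  exact intervalIntegral.integral_mono_on hpq ((hf.mul hw).intervalIntegrable _ _)
    ((hw.const_mul θ).intervalIntegrable _ _) h

theorem abs_integral_mul_le_of_memLp_two {f g : ℝ → ℝ} (hf : MemLp f 2 volume)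
    (hfg : Integrable (fun x => f x * g x)) {p q M t : ℝ} (hpq : p ≤ q)
    (hg0 : ∀ x ∉ Icc p q, g x = 0) (hgM : ∀ x, |g x| ≤ M) (ht : 0 < t) :
    |∫ x, f x * g x| ≤ M * ((q - p) * t / 2 + (∫ x, f x ^ 2) / (2 * t)) := by
  have hM : 0 ≤ M := (abs_nonneg _).trans (hgM p)
  have hsq : Integrable (fun x => f x ^ 2) := hf.integrable_sq
  have hdom : IntegrableOn (fun x => M * (t / 2 + f x ^ 2 / (2 * t))) (Icc p q) :=
    ((integrableOn_const measure_Icc_lt_top.ne).add (hsq.integrableOn.div_const _)).const_mul M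
  have hpt (x : ℝ) :
      |f x * g x| ≤ (Icc p q).indicator (fun x => M * (t / 2 + f x ^ 2 / (2 * t))) x := by
    by_cases hx : x ∈ Icc p q
    · have hamgm : |f x| ≤ t / 2 + f x ^ 2 / (2 * t) := by
        rw [div_add_div _ _ two_ne_zero (by positivity), le_div_iff₀ (by positivity)]
        nlinarith [two_mul_le_add_sq t |f x|, sq_abs (f x)]
      rw [indicator_of_mem hx, abs_mul, mul_comm M]
      exact mul_le_mul hamgm (hgM x) (abs_nonneg _) (by positivity)
    · rw [indicator_of_notMem hx, hg0 x hx, mul_zero, abs_zero]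
  calc |∫ x, f x * g x| ≤ ∫ x, |f x * g x| := abs_integral_le_integral_abs
    _ ≤ ∫ x in Icc p q, M * (t / 2 + f x ^ 2 / (2 * t)) := by
      rw [← integral_indicator measurableSet_Icc]
      exact integral_mono hfg.abs (hdom.integrable_indicator measurableSet_Icc) hpt
    _ = M * ((q - p) * t / 2 + (∫ x in Icc p q, f x ^ 2) / (2 * t)) := by
      rw [integral_const_mul, integral_add (integrableOn_const measure_Icc_lt_top.ne).integrable
        (hsq.integrableOn.div_const _), setIntegral_const, Real.volume_real_Icc_of_le hpq,
        smul_eq_mul, integral_div]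
      ring
    _ ≤ M * ((q - p) * t / 2 + (∫ x, f x ^ 2) / (2 * t)) := by
      gcongr
      · exact Eventually.of_forall fun x => sq_nonneg _
      · exact Measure.restrict_le_self

noncomputable def plateau (L a b x : ℝ) : ℝ :=
  smoothTransition ((x - a + L) / L) * smoothTransition ((b + L - x) / L)

namespace plateau

open smoothTransition

variable {L a b x : ℝ}

theorem contDiff : ContDiff ℝ 1 (plateau L a b) := by
  unfold plateau; fun_prop

theorem nonneg : 0 ≤ plateau L a b x :=
  mul_nonneg (smoothTransition.nonneg _) (smoothTransition.nonneg _)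

theorem eq_one (hL : 0 < L) (hax : a ≤ x) (hxb : x ≤ b) : plateau L a b x = 1 := by
  rw [plateau, one_of_one_le ((one_le_div hL).2 (by linarith)),
    one_of_one_le ((one_le_div hL).2 (by linarith)), one_mul]

theorem eq_zero_of_le (hL : 0 < L) (hx : x ≤ a - L) : plateau L a b x = 0 := by
  rw [plateau, zero_of_nonpos (div_nonpos_of_nonpos_of_nonneg (by linarith) hL.le), zero_mul]

theorem eq_zero_of_ge (hL : 0 < L) (hx : b + L ≤ x) : plateau L a b x = 0 := by
  rw [plateau, zero_of_nonpos (x := (b + L - x) / L)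
    (div_nonpos_of_nonpos_of_nonneg (by linarith) hL.le), mul_zero]

theorem hasCompactSupport (hL : 0 < L) : HasCompactSupport (plateau L a b) :=
  HasCompactSupport.intro (isCompact_Icc (a := a - L) (b := b + L)) fun x hx => by
    rcases not_and_or.1 hx with h | h
    · exact eq_zero_of_le hL (not_le.1 h).le
    · exact eq_zero_of_ge hL (not_le.1 h).le

theorem deriv_eq (L a b x : ℝ) : deriv (plateau L a b) x =
    deriv smoothTransition ((x - a + L) / L) / L * smoothTransition ((b + L - x) / L)
      - smoothTransition ((x - a + L) / L) * (deriv smoothTransition ((b + L - x) / L) / L) := by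
  have hst (y : ℝ) : HasDerivAt smoothTransition (deriv smoothTransition y) y :=
    ((smoothTransition.contDiff (n := 1)).differentiable one_ne_zero y).hasDerivAt
  have hu : HasDerivAt (fun x => (x - a + L) / L) (1 / L) x :=
    (((hasDerivAt_id x).sub_const a).add_const L).div_const L
  have hw : HasDerivAt (fun x => (b + L - x) / L) (-1 / L) x :=
    (((hasDerivAt_id x).const_sub (b + L))).div_const L
  refine (((hst _).comp x hu).mul ((hst _).comp x hw)).deriv.trans ?_
  simp only [Function.comp_apply]
  ring

theorem deriv_nonneg (hL : 0 < L) (hx : x ≤ b) : 0 ≤ deriv (plateau L a b) x := by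
  rw [deriv_eq, deriv_eq_zero_of_one_le (x := (b + L - x) / L) ((one_le_div hL).2 (by linarith)),
    zero_div, mul_zero, sub_zero]
  exact mul_nonneg (div_nonneg smoothTransition.monotone.deriv_nonneg hL.le)
    (smoothTransition.nonneg _)

theorem deriv_nonpos (hL : 0 < L) (hx : a ≤ x) : deriv (plateau L a b) x ≤ 0 := by
  rw [deriv_eq, deriv_eq_zero_of_one_le (x := (x - a + L) / L) ((one_le_div hL).2 (by linarith)),
    zero_div, zero_mul, zero_sub, neg_nonpos]
  exact mul_nonneg (smoothTransition.nonneg _)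
    (div_nonneg smoothTransition.monotone.deriv_nonneg hL.le)

theorem deriv_eq_zero_of_le (hL : 0 < L) (hx : x ≤ a - L) : deriv (plateau L a b) x = 0 := by
  have hu : (x - a + L) / L ≤ 0 := div_nonpos_of_nonpos_of_nonneg (by linarith) hL.le
  rw [deriv_eq, deriv_eq_zero_of_nonpos hu, zero_of_nonpos hu]
  ring

theorem deriv_eq_zero_of_ge (hL : 0 < L) (hx : b + L ≤ x) : deriv (plateau L a b) x = 0 := by
  have hw : (b + L - x) / L ≤ 0 := div_nonpos_of_nonpos_of_nonneg (by linarith) hL.le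
  rw [deriv_eq, deriv_eq_zero_of_nonpos hw, zero_of_nonpos hw]
  ring

theorem deriv_eq_zero_of_mem_Icc (hL : 0 < L) (hax : a ≤ x) (hxb : x ≤ b) :
    deriv (plateau L a b) x = 0 := by
  rw [deriv_eq, deriv_eq_zero_of_one_le (x := (x - a + L) / L) ((one_le_div hL).2 (by linarith)),
    deriv_eq_zero_of_one_le (x := (b + L - x) / L) ((one_le_div hL).2 (by linarith))]
  ring

theorem abs_deriv_le {K : ℝ} (hL : 0 < L) (hK : ∀ y, |deriv smoothTransition y| ≤ K) :
    |deriv (plateau L a b) x| ≤ 2 * K / L := by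
  have hst (y : ℝ) : |smoothTransition y| ≤ 1 :=
    abs_le.2 ⟨by linarith [smoothTransition.nonneg y], le_one y⟩
  rw [deriv_eq]
  refine (abs_sub _ _).trans ?_
  simp only [abs_mul, abs_div, abs_of_pos hL]
  calc |deriv smoothTransition ((x - a + L) / L)| / L * |smoothTransition ((b + L - x) / L)|
        + |smoothTransition ((x - a + L) / L)| * (|deriv smoothTransition ((b + L - x) / L)| / L)
      ≤ K / L * 1 + 1 * (K / L) := by
        have hK0 : 0 ≤ K / L := div_nonneg ((abs_nonneg _).trans (hK 0)) hL.le
        gcongr <;> first | exact hK _ | exact hst _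
    _ = 2 * K / L := by ring

theorem continuous_deriv : Continuous (deriv (plateau L a b)) :=
  contDiff.continuous_deriv le_rfl

theorem integral_deriv_left (hL : 0 < L) (hab : a ≤ b) :
    ∫ x in (a - L)..a, deriv (plateau L a b) x = 1 := by
  rw [intervalIntegral.integral_deriv_eq_sub (fun x _ => (contDiff.differentiable one_ne_zero) x)
    (continuous_deriv.intervalIntegrable _ _), eq_one hL le_rfl hab, eq_zero_of_le hL le_rfl,
    sub_zero]

theorem integral_deriv_right (hL : 0 < L) (hab : a ≤ b) :
    ∫ x in b..(b + L), deriv (plateau L a b) x = -1 := by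
  rw [intervalIntegral.integral_deriv_eq_sub (fun x _ => (contDiff.differentiable one_ne_zero) x)
    (continuous_deriv.intervalIntegrable _ _), eq_one hL hab le_rfl, eq_zero_of_ge hL le_rfl,
    zero_sub]

theorem integral_mul_deriv (hL : 0 < L) (hab : a ≤ b) {g : ℝ → ℝ} (hg : Continuous g) :
    ∫ x, g x * deriv (plateau L a b) x =
      (∫ x in (a - L)..a, g x * deriv (plateau L a b) x)
        + ∫ x in b..(b + L), g x * deriv (plateau L a b) x := by
  have hint (p q : ℝ) : IntervalIntegrable (fun x => g x * deriv (plateau L a b) x) volume p q :=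
    (hg.mul continuous_deriv).intervalIntegrable p q
  have hsupp : Function.support (fun x => g x * deriv (plateau L a b) x) ⊆ Ioc (a - L) (b + L) :=
    fun x hx => by
      by_contra hmem
      rcases not_and_or.1 hmem with h | h
      · exact Function.mem_support.1 hx (by rw [deriv_eq_zero_of_le hL (not_lt.1 h), mul_zero])
      · exact Function.mem_support.1 hx (by rw [deriv_eq_zero_of_ge hL (not_le.1 h).le, mul_zero])
  have hmid : ∫ x in a..b, g x * deriv (plateau L a b) x = 0 := by
    refine (intervalIntegral.integral_congr (g := fun _ => 0) fun x hx => ?_).trans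
      intervalIntegral.integral_zero
    rw [uIcc_of_le hab] at hx
    simp only [deriv_eq_zero_of_mem_Icc hL hx.1 hx.2, mul_zero]
  rw [← intervalIntegral.integral_eq_integral_of_support_subset hsupp,
    ← intervalIntegral.integral_add_adjacent_intervals (hint _ a) (hint a _),
    ← intervalIntegral.integral_add_adjacent_intervals (hint a b) (hint b _), hmid, zero_add]

theorem integral_mul_deriv_nonneg (hL : 0 < L) (hab : a ≤ b) {g : ℝ → ℝ} (hg : Continuous g)
    {θ : ℝ} (hleft : ∀ x ≤ a, θ ≤ g x) (hright : ∀ x ≥ b, g x ≤ θ) :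
    0 ≤ ∫ x, g x * deriv (plateau L a b) x := by
  have hup := intervalIntegral_const_mul_le (p := a - L) (q := a) (w := deriv (plateau L a b))
    (θ := θ) (by linarith) hg continuous_deriv fun x hx =>
      mul_le_mul_of_nonneg_right (hleft x hx.2) (deriv_nonneg hL (hx.2.trans hab))
  have hdown := intervalIntegral_const_mul_le (p := b) (q := b + L) (w := deriv (plateau L a b))
    (θ := θ) (by linarith) hg continuous_deriv fun x hx =>
      mul_le_mul_of_nonpos_right (hright x hx.1) (deriv_nonpos hL (hab.trans hx.1))
  rw [integral_deriv_left hL hab] at hup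
  rw [integral_deriv_right hL hab] at hdown
  rw [integral_mul_deriv hL hab hg]
  linarith

theorem integral_mul_deriv_le (hL : 0 < L) (hab : a ≤ b) {g : ℝ → ℝ} (hg : Continuous g)
    (hg0 : ∀ x, 0 ≤ g x) {M : ℝ} (hM : ∀ x ∈ Icc (a - L) a, g x ≤ M) :
    ∫ x, g x * deriv (plateau L a b) x ≤ M := by
  have hup := intervalIntegral_le_const_mul (p := a - L) (q := a) (w := deriv (plateau L a b))
    (θ := M) (by linarith) hg continuous_deriv fun x hx =>
      mul_le_mul_of_nonneg_right (hM x hx) (deriv_nonneg hL (hx.2.trans hab))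
  have hdown := intervalIntegral_le_const_mul (p := b) (q := b + L) (w := deriv (plateau L a b))
    (θ := 0) (by linarith) hg continuous_deriv fun x hx => by
      rw [zero_mul]
      exact mul_nonpos_of_nonneg_of_nonpos (hg0 x) (deriv_nonpos hL (hab.trans hx.1))
  rw [integral_deriv_left hL hab] at hup
  rw [integral_mul_deriv hL hab hg]
  linarith

theorem exists_abs_integral_mul_deriv_lt {f : ℝ → ℝ} (hf : MemLp f 2 volume) (hab : a ≤ b)
    {ε : ℝ} (hε : 0 < ε) : ∃ L > 0, |∫ x, f x * deriv (plateau L a b) x| < ε := by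
  obtain ⟨K, hK⟩ := smoothTransition.exists_abs_deriv_le
  have hK0 : 0 ≤ K := (abs_nonneg _).trans (hK 0)
  set Q := ∫ x, f x ^ 2
  have hQ : 0 ≤ Q := integral_nonneg fun x => sq_nonneg _
  set t := ε / (3 * (2 * K + 1))
  have ht : 0 < t := by positivity
  set L := b - a + (2 * K + 1) * Q / (t * ε) + 1
  have hQL : (2 * K + 1) * Q < L * (t * ε) := by
    rw [← div_lt_iff₀ (by positivity)]
    linarith
  have hbaL : b - a < L := by
    have : 0 ≤ (2 * K + 1) * Q / (t * ε) := by positivity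
    linarith
  have hL : 0 < L := by linarith
  refine ⟨L, hL, ?_⟩
  have hint : Integrable (fun x => f x * deriv (plateau L a b) x) := by
    simpa only [smul_eq_mul] using (hf.locallyIntegrable one_le_two)
      |>.integrable_smul_right_of_hasCompactSupport continuous_deriv (hasCompactSupport hL).deriv
  have hsupp (x : ℝ) (hx : x ∉ Icc (a - L) (b + L)) : deriv (plateau L a b) x = 0 := by
    rcases not_and_or.1 hx with h | h
    · exact deriv_eq_zero_of_le hL (not_le.1 h).le
    · exact deriv_eq_zero_of_ge hL (not_le.1 h).le
  have hderiv (x : ℝ) : |deriv (plateau L a b) x| ≤ (2 * K + 1) / L :=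
    (abs_deriv_le hL hK).trans (by gcongr; linarith)
  refine (abs_integral_mul_le_of_memLp_two hf hint (by linarith) hsupp hderiv ht).trans_lt ?_
  rw [div_mul_eq_mul_div, div_lt_iff₀ hL]
  have hspread : (2 * K + 1) * ((b + L - (a - L)) * t / 2) ≤ ε / 2 * L := by
    calc (2 * K + 1) * ((b + L - (a - L)) * t / 2) ≤ (2 * K + 1) * (3 * L * t / 2) := by
          gcongr; linarith
      _ = ε / 2 * L := by simp only [t]; field_simp
  have henergy : (2 * K + 1) * (Q / (2 * t)) < ε / 2 * L := by
    rw [mul_div_assoc', div_lt_iff₀ (by positivity)]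
    linarith
  linarith

end plateau

namespace IsWeakFront

variable {d r c Um Vm Up Vp : ℝ} {U V : ℝ → ℝ}

theorem integral_flux_add_drift_eq_reaction (h : IsWeakFront d r c U V Um Vm Up Vp) {ψ : ℝ → ℝ}
    (hψ : ContDiff ℝ 1 ψ) (hψc : HasCompactSupport ψ) :
    (∫ x, (1 - U x) * deriv V x * deriv ψ x) + c * ∫ x, V x * deriv ψ x =
      ∫ x, r * V x * (1 - V x) * ψ x := by
  obtain ⟨-, hV, -, -, -, hL2, -, hweak, -⟩ := h
  have hψ' : Continuous (deriv ψ) := hψ.continuous_deriv le_rfl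
  have hflux : Integrable fun x => (1 - U x) * deriv V x * deriv ψ x := by
    simpa only [smul_eq_mul] using (hL2.locallyIntegrable one_le_two)
      |>.integrable_smul_right_of_hasCompactSupport hψ' hψc.deriv
  have hdrift : Integrable fun x => V x * deriv ψ x :=
    (hV.mul hψ').integrable_of_hasCompactSupport hψc.deriv.mul_left
  have hreact : Integrable fun x => r * V x * (1 - V x) * ψ x :=
    (((continuous_const.mul hV).mul (continuous_const.sub hV)).mul hψ.continuous)
      |>.integrable_of_hasCompactSupport hψc.mul_left
  have hsplit :
      (fun x => ((1 - U x) * deriv V x + c * V x) * deriv ψ x - r * V x * (1 - V x) * ψ x)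
      = fun x => ((1 - U x) * deriv V x * deriv ψ x + c * (V x * deriv ψ x))
          - r * V x * (1 - V x) * ψ x := by
    funext x; ring
  have := hweak ψ hψ hψc
  have hsum : Integrable fun x => (1 - U x) * deriv V x * deriv ψ x + c * (V x * deriv ψ x) :=
    hflux.add (hdrift.const_mul c)
  rwa [hsplit, integral_sub hsum hreact,
    integral_add hflux (hdrift.const_mul c), integral_const_mul, sub_eq_zero] at this

theorem speed_mul_integral_mul_exp_deriv (h : IsWeakFront d r c U V Um Vm Up Vp) {ψ : ℝ → ℝ}
    (hψ : ContDiff ℝ 1 ψ) (hψc : HasCompactSupport ψ) (μ : ℝ) :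
    c * ∫ x, U x * exp (μ * x) * deriv ψ x =
      ∫ x, (1 - U x - d * V x - c * μ) * (U x * exp (μ * x)) * ψ x := by
  obtain ⟨hU, hV, -, -, -, -, hweak, -⟩ := h
  have hψ' : Continuous (deriv ψ) := hψ.continuous_deriv le_rfl
  have hφ : ContDiff ℝ 1 fun x => exp (μ * x) * ψ x :=
    (contDiff_exp.comp (contDiff_const.mul contDiff_id)).mul hψ
  have hderiv (x : ℝ) :
      deriv (fun x => exp (μ * x) * ψ x) x = μ * exp (μ * x) * ψ x + exp (μ * x) * deriv ψ x := by
    have hlin : HasDerivAt (fun x => μ * x) μ x := by simpa using (hasDerivAt_id x).const_mul μ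
    exact (hlin.exp.mul (hψ.differentiable one_ne_zero x).hasDerivAt).deriv.trans (by ring)
  have hsplit : (fun x => U x * (c * deriv (fun x => exp (μ * x) * ψ x) x
        - (1 - U x - d * V x) * (exp (μ * x) * ψ x)))
      = fun x => c * (U x * exp (μ * x) * deriv ψ x)
          - (1 - U x - d * V x - c * μ) * (U x * exp (μ * x)) * ψ x := by
    funext x; rw [hderiv]; ring
  have hdrift : Integrable fun x => U x * exp (μ * x) * deriv ψ x :=
    (by fun_prop : Continuous fun x => U x * exp (μ * x) * deriv ψ x)
      |>.integrable_of_hasCompactSupport hψc.deriv.mul_left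
  have hreact : Integrable fun x => (1 - U x - d * V x - c * μ) * (U x * exp (μ * x)) * ψ x :=
    (by fun_prop : Continuous fun x => (1 - U x - d * V x - c * μ) * (U x * exp (μ * x)) * ψ x)
      |>.integrable_of_hasCompactSupport hψc.mul_left
  have := hweak _ hφ hψc.mul_left
  rwa [hsplit, integral_sub (hdrift.const_mul c) hreact, integral_const_mul, sub_eq_zero] at this

theorem speed_pos (h : IsWeakFront d r c U V Um 1 Up 0) (hr : 0 < r) : 0 < c := by
  obtain ⟨-, hV, -, hV01, -, hL2, -, -, -, hVbot, -, hVtop⟩ := id h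
  obtain ⟨a₀, ha₀⟩ := eventually_atBot.1 (hVbot.eventually (eventually_ge_nhds one_half_lt_one))
  obtain ⟨b₀, hb₀⟩ := eventually_atTop.1 (hVtop.eventually (eventually_le_nhds one_half_pos))
  obtain ⟨ξ, hξ⟩ : ∃ ξ, V ξ = 1 / 2 :=
    intermediate_value_univ b₀ a₀ hV ⟨hb₀ b₀ le_rfl, ha₀ a₀ le_rfl⟩
  set a := min a₀ (ξ - 1)
  set b := max b₀ (ξ + 1)
  have hξab : ξ ∈ Icc a b :=
    ⟨(min_le_right _ _).trans (by linarith), (by linarith : ξ ≤ ξ + 1).trans (le_max_right _ _)⟩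
  have hab : a < b :=
    (min_le_right _ _).trans_lt ((by linarith : ξ - 1 < ξ + 1).trans_le (le_max_right _ _))
  have hreact_nonneg (x : ℝ) : 0 ≤ r * V x * (1 - V x) :=
    mul_nonneg (mul_nonneg hr.le (hV01 x).1) (sub_nonneg.2 (hV01 x).2)
  have hδ : 0 < ∫ x in a..b, r * V x * (1 - V x) :=
    intervalIntegral.integral_pos hab (by fun_prop) (fun x _ => hreact_nonneg x)
      ⟨ξ, hξab, by rw [hξ]; positivity⟩
  obtain ⟨L, hL, hflux⟩ := plateau.exists_abs_integral_mul_deriv_lt hL2 hab.le hδ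
  have hbal := h.integral_flux_add_drift_eq_reaction (ψ := plateau L a b) plateau.contDiff
    (plateau.hasCompactSupport hL)
  have hreact :
      ∫ x in a..b, r * V x * (1 - V x) ≤ ∫ x, r * V x * (1 - V x) * plateau L a b x := by
    calc ∫ x in a..b, r * V x * (1 - V x)
        = ∫ x in Ioc a b, r * V x * (1 - V x) * plateau L a b x := by
          rw [intervalIntegral.integral_of_le hab.le]
          refine setIntegral_congr_fun measurableSet_Ioc fun x hx => ?_
          simp only [plateau.eq_one hL hx.1.le hx.2, mul_one]
      _ ≤ _ := setIntegral_le_integral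
          ((by fun_prop : Continuous fun x => r * V x * (1 - V x))
            |>.mul plateau.contDiff.continuous
            |>.integrable_of_hasCompactSupport (plateau.hasCompactSupport hL).mul_left)
          (Eventually.of_forall fun x => mul_nonneg (hreact_nonneg x) plateau.nonneg)
  have hdrift : 0 ≤ ∫ x, V x * deriv (plateau L a b) x :=
    plateau.integral_mul_deriv_nonneg hL hab.le hV (θ := 1 / 2)
      (fun x hx => ha₀ x (hx.trans (min_le_left _ _)))
      (fun x hx => hb₀ x ((le_max_left _ _).trans hx))
  have hpos : 0 < c * ∫ x, V x * deriv (plateau L a b) x := by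
    linarith [(abs_lt.1 hflux).2]
  exact pos_of_mul_pos_left hpos hdrift

theorem mul_intervalIntegral_mul_exp_le (h : IsWeakFront d r c U V Um Vm Up Vp) (hc : 0 < c)
    {μ κ A b M : ℝ} (hκ0 : 0 ≤ κ) (hAb : A ≤ b)
    (hκ : ∀ x ∈ Icc (A - 1) (b + 1), κ ≤ 1 - U x - d * V x - c * μ)
    (hM : ∀ x ∈ Icc (A - 1) A, U x * exp (μ * x) ≤ M) :
    κ * ∫ x in A..b, U x * exp (μ * x) ≤ c * M := by
  obtain ⟨hU, -, hU01, -⟩ := id h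
  have hg : Continuous fun x => U x * exp (μ * x) := by fun_prop
  have hg0 (x : ℝ) : 0 ≤ U x * exp (μ * x) := mul_nonneg (hU01 x).1 (exp_pos _).le
  have hgψ : Integrable fun x => U x * exp (μ * x) * plateau 1 A b x :=
    (hg.mul plateau.contDiff.continuous).integrable_of_hasCompactSupport
      (plateau.hasCompactSupport one_pos).mul_left
  have hcut :
      ∫ x in A..b, U x * exp (μ * x) ≤ ∫ x, U x * exp (μ * x) * plateau 1 A b x := by
    calc ∫ x in A..b, U x * exp (μ * x)
        = ∫ x in Ioc A b, U x * exp (μ * x) * plateau 1 A b x := by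
          rw [intervalIntegral.integral_of_le hAb]
          refine setIntegral_congr_fun measurableSet_Ioc fun x hx => ?_
          simp only [plateau.eq_one one_pos hx.1.le hx.2, mul_one]
      _ ≤ _ := setIntegral_le_integral hgψ
          (Eventually.of_forall fun x => mul_nonneg (hg0 x) plateau.nonneg)
  have hrate : κ * ∫ x, U x * exp (μ * x) * plateau 1 A b x
      ≤ ∫ x, (1 - U x - d * V x - c * μ) * (U x * exp (μ * x)) * plateau 1 A b x := by
    rw [← integral_const_mul]
    refine integral_mono (hgψ.const_mul κ) ?_ fun x => ?_
    · obtain ⟨-, hV, -⟩ := h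
      exact (by fun_prop :
          Continuous fun x => (1 - U x - d * V x - c * μ) * (U x * exp (μ * x)))
        |>.mul plateau.contDiff.continuous
        |>.integrable_of_hasCompactSupport (plateau.hasCompactSupport one_pos).mul_left
    by_cases hx : x ∈ Icc (A - 1) (b + 1)
    · have := mul_le_mul_of_nonneg_right (hκ x hx)
        (mul_nonneg (hg0 x) (plateau.nonneg : 0 ≤ plateau 1 A b x))
      linarith
    · rcases not_and_or.1 hx with hx | hx
      · simp [plateau.eq_zero_of_le one_pos (not_le.1 hx).le]
      · simp [plateau.eq_zero_of_ge one_pos (not_le.1 hx).le]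
  calc κ * ∫ x in A..b, U x * exp (μ * x)
      ≤ κ * ∫ x, U x * exp (μ * x) * plateau 1 A b x := mul_le_mul_of_nonneg_left hcut hκ0
    _ ≤ _ := hrate
    _ = c * ∫ x, U x * exp (μ * x) * deriv (plateau 1 A b) x :=
      (h.speed_mul_integral_mul_exp_deriv plateau.contDiff
        (plateau.hasCompactSupport one_pos) μ).symm
    _ ≤ c * M :=
      mul_le_mul_of_nonneg_left (plateau.integral_mul_deriv_le one_pos hAb hg hg0 hM) hc.le

theorem exists_forall_le_eq_zero (h : IsWeakFront d r c U V 0 Vm Up Vp) (hd0 : 0 ≤ d)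
    (hd1 : d < 1) (hc : 0 < c) : ∃ m, ∀ x ≤ m, U x = 0 := by
  obtain ⟨hU, -, hU01, hV01, -, -, -, -, hUbot, -⟩ := id h
  set k := (1 - d) / 2
  have hk : 0 < k := by simp only [k]; linarith
  obtain ⟨m, hm⟩ := eventually_atBot.1 (hUbot.eventually (eventually_le_nhds hk))
  set μ := k / (2 * c)
  have hμ : 0 < μ := by positivity
  have hg : Continuous fun x => U x * exp (μ * x) := by fun_prop
  have hg0 (x : ℝ) : 0 ≤ U x * exp (μ * x) := mul_nonneg (hU01 x).1 (exp_pos _).le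
  -- left of `m` the rate `1 - U - d V` is at least `k`, which beats the drift `c μ = k / 2`
  have hdecay (A : ℝ) (hA : A ≤ m - 1) :
      k / 2 * ∫ x in A..(m - 1), U x * exp (μ * x) ≤ c * exp (μ * A) := by
    refine h.mul_intervalIntegral_mul_exp_le hc (by positivity) hA (fun x hx => ?_)
      (fun x hx => ?_)
    · have hdV : d * V x ≤ d := mul_le_of_le_one_right hd0 (hV01 x).2
      have hcμ : c * μ = k / 2 := by simp only [μ]; field_simp
      have hkd : 1 - d = 2 * k := by simp only [k]; ring
      have := hm x (by linarith [hx.2])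
      linarith
    · calc U x * exp (μ * x) ≤ 1 * exp (μ * A) := by
            gcongr
            exacts [(hU01 x).2, hx.2]
        _ = exp (μ * A) := one_mul _
  refine ⟨m - 1, fun x hx => ?_⟩
  have hlim : Tendsto (fun A => c * exp (μ * A)) atBot (𝓝 0) := by
    simpa using (tendsto_exp_atBot.comp (tendsto_id.const_mul_atBot hμ)).const_mul c
  have hI : k / 2 * ∫ y in (x - 1)..(m - 1), U y * exp (μ * y) ≤ 0 :=
    ge_of_tendsto hlim <| eventually_atBot.2 ⟨x - 1, fun A hA =>
      (mul_le_mul_of_nonneg_left (intervalIntegral.integral_mono_interval hA (by linarith) le_rfl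
        (Eventually.of_forall hg0) (hg.intervalIntegrable _ _)) (by positivity)).trans
        (hdecay A (by linarith))⟩
  have hzero := eq_zero_of_intervalIntegral_nonpos hg hg0 (by linarith : x - 1 < m - 1)
    (nonpos_of_mul_nonpos_right hI (by positivity)) ⟨by linarith, hx⟩
  exact (mul_eq_zero.1 hzero).resolve_right (exp_pos _).ne'

theorem eq_zero_of_speed_pos (h : IsWeakFront d r c U V 0 Vm Up Vp) (hd0 : 0 ≤ d) (hd1 : d < 1)
    (hc : 0 < c) (x : ℝ) : U x = 0 := by
  obtain ⟨m, hm⟩ := h.exists_forall_le_eq_zero hd0 hd1 hc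
  rcases le_or_gt x m with hx | hx
  · exact hm x hx
  obtain ⟨hU, -, hU01, hV01, -⟩ := id h
  have hg : Continuous fun x => U x * exp (-2 / c * x) := by fun_prop
  have hg0 (x : ℝ) : 0 ≤ U x * exp (-2 / c * x) := mul_nonneg (hU01 x).1 (exp_pos _).le
  -- with the drift `c μ = -2` the rate `1 - U - d V - c μ` is at least `1` everywhere
  have hI := h.mul_intervalIntegral_mul_exp_le hc (μ := -2 / c) (κ := 1) (M := 0) zero_le_one
    hx.le
    (fun y _ => by
      have hdV : d * V y ≤ 1 := (mul_le_of_le_one_right hd0 (hV01 y).2).trans hd1.le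
      have hcμ : c * (-2 / c) = -2 := by field_simp
      linarith [(hU01 y).2])
    (fun y hy => by rw [hm y hy.2, zero_mul])
  have hzero := eq_zero_of_intervalIntegral_nonpos hg hg0 hx (by linarith) ⟨hx.le, le_rfl⟩
  exact (mul_eq_zero.1 hzero).resolve_right (exp_pos _).ne'

theorem speed_nonpos (h : IsWeakFront d r c U V 0 Vm 1 Vp) (hd0 : 0 ≤ d) (hd1 : d < 1) :
    c ≤ 0 := by
  by_contra! hc
  obtain ⟨-, -, -, -, -, -, -, -, -, -, hU1, -⟩ := id h
  rw [show U = fun _ => 0 from funext (h.eq_zero_of_speed_pos hd0 hd1 hc)] at hU1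
  exact one_ne_zero (tendsto_nhds_unique hU1 tendsto_const_nhds)

end IsWeakFront

/-- When 0 < d < 1, there is no propagation front (for any speed c) connecting
the infected state (0,1) to the healthy state (1,0). -/
theorem statement5 (d r : ℝ) (hd0 : 0 < d) (hd1 : d < 1) (hr : 0 < r) :
    ¬ ∃ (c : ℝ) (U V : ℝ → ℝ), IsWeakFront d r c U V 0 1 1 0 := by
  rintro ⟨c, U, V, h⟩
  exact (h.speed_nonpos hd0.le hd1).not_gt (h.speed_pos hr)
end

section
/- Let d > 1, r > 0, c > 0 and α > 0. Suppose (u,v,w) is a solution of the desingularized system (Ode3) on an interval J = (−∞, y₀) satisfying the unstable-manifold asymptotics with parameter α, and suppose v(y) > 0 for all y ∈ J. Then (u(y), v(y), w(y)) ∈ D for all y ∈ J, i.e. 0 < u(y) < 1, 0 < v(y) < 1 and w(y) < 0 for all y ∈ J. -/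
/-!
Near `-∞` the asymptotics place the orbit in `D`, and it cannot leave `D` at a first exit point
`y₁`. Both `u` and `1 - u` solve linear equations `f' = g f` with `g` continuous, so they cannot
vanish in finite time. At a first zero of `w`, `v` has been decreasing from its limit `1`, so
`v y₁ < 1` and `w' y₁ = -r v (1 - u) (1 - v) < 0`, which is impossible for a function rising to
`0` from below. Finally `v < 1` because `v` decreases from `1`.
-/

open Filter Topology Asymptotics

/-- The desingularized system (Ode3): c u' = -u(1-u)(1-u-dv), v' = w,
w' = -c w - r v (1-u)(1-v), required to hold at every point of the set `s`. -/
def SolvesOde3 (d r c : ℝ) (u v w : ℝ → ℝ) (s : Set ℝ) : Prop :=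
  ∀ y ∈ s,
    HasDerivAt u (-(u y * (1 - u y) * (1 - u y - d * v y)) / c) y ∧
    HasDerivAt v (w y) y ∧
    HasDerivAt w (-(c * w y) - r * v y * (1 - u y) * (1 - v y)) y

/-- Unstable-manifold asymptotics with parameter α as y → -∞:
u(y) = α e^{μy} + O(e^{(μ+η)y}), v(y) = 1 - e^{λy} + O(e^{(λ+η)y}),
w(y) = -λ e^{λy} + O(e^{(λ+η)y}). -/
def UnstableAsym (lam μ η α : ℝ) (u v w : ℝ → ℝ) : Prop :=
  (fun y => u y - α * Real.exp (μ * y)) =O[atBot] (fun y => Real.exp ((μ + η) * y)) ∧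
  (fun y => v y - (1 - Real.exp (lam * y))) =O[atBot] (fun y => Real.exp ((lam + η) * y)) ∧
  (fun y => w y - (-(lam * Real.exp (lam * y)))) =O[atBot] (fun y => Real.exp ((lam + η) * y))

open Real Set

lemma isEquivalent_of_isBigO_exp {g : ℝ → ℝ} {a b η : ℝ} (ha : a ≠ 0) (hη : 0 < η)
    (h : (fun y => g y - a * exp (b * y)) =O[atBot] fun y => exp ((b + η) * y)) :
    g ~[atBot] fun y => a * exp (b * y) := by
  have hsmall : (fun y => exp ((b + η) * y)) =o[atBot] fun y => exp (b * y) := by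
    refine isLittleO_exp_comp_exp_comp.2 ?_
    convert tendsto_id.const_mul_atBot_of_neg (neg_neg_of_pos hη) using 1
    ext y; simp only [id]; ring
  exact h.trans_isLittleO (hsmall.const_mul_right' (isUnit_iff_ne_zero.2 ha))

lemma eventually_pos_of_isBigO_exp {g : ℝ → ℝ} {a b η : ℝ} (ha : 0 < a) (hη : 0 < η)
    (h : (fun y => g y - a * exp (b * y)) =O[atBot] fun y => exp ((b + η) * y)) :
    ∀ᶠ y in atBot, 0 < g y :=
  (isEquivalent_of_isBigO_exp ha.ne' hη h).eventually_pos
    (Eventually.of_forall fun y => by positivity)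

lemma tendsto_zero_of_isBigO_exp {g : ℝ → ℝ} {a b η : ℝ} (ha : a ≠ 0) (hb : 0 < b)
    (hη : 0 < η)
    (h : (fun y => g y - a * exp (b * y)) =O[atBot] fun y => exp ((b + η) * y)) :
    Tendsto g atBot (𝓝 0) := by
  have hexp : Tendsto (fun y => a * exp (b * y)) atBot (𝓝 0) := by
    simpa using (tendsto_exp_atBot.comp (tendsto_id.const_mul_atBot hb)).const_mul a
  exact (isEquivalent_of_isBigO_exp ha hη h).symm.tendsto_nhds hexp

lemma UnstableAsym.eventually_bounds {lam μ η α : ℝ} {u v w : ℝ → ℝ}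
    (h : UnstableAsym lam μ η α u v w) (hα : 0 < α) (hlam : 0 < lam) (hμ : 0 < μ)
    (hη : 0 < η) :
    ∀ᶠ y in atBot, 0 < u y ∧ u y < 1 ∧ v y < 1 ∧ w y < 0 := by
  obtain ⟨hu, hv, hw⟩ := h
  have hv' : (fun y => (1 - v y) - 1 * exp (lam * y)) =O[atBot]
      fun y => exp ((lam + η) * y) :=
    hv.neg_left.congr_left fun y => by ring
  have hw' : (fun y => -w y - lam * exp (lam * y)) =O[atBot]
      fun y => exp ((lam + η) * y) :=
    hw.neg_left.congr_left fun y => by ring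
  filter_upwards [eventually_pos_of_isBigO_exp hα hη hu,
    (tendsto_zero_of_isBigO_exp hα.ne' hμ hη hu).eventually (gt_mem_nhds one_pos),
    eventually_pos_of_isBigO_exp one_pos hη hv', eventually_pos_of_isBigO_exp hlam hη hw']
    with y hu0 hu1 hv1 hw0
  exact ⟨hu0, hu1, by linarith, by linarith⟩

lemma forall_pos_of_eventually_pos {f : ℝ → ℝ} {y₀ : ℝ} (hf : ∀ y < y₀, ContinuousAt f y)
    (hev : ∀ᶠ y in atBot, 0 < f y)
    (hno_first_zero : ∀ y₁ < y₀, (∀ x < y₁, 0 < f x) → f y₁ ≠ 0) :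
    ∀ y < y₀, 0 < f y := by
  by_contra! ⟨z, hz, hfz⟩
  set S := {y | y < y₀ ∧ f y ≤ 0}
  obtain ⟨a, ha⟩ := eventually_atBot.1 hev
  have hbdd : BddBelow S := ⟨a, fun y hy => le_of_not_ge fun hya => (ha y hya).not_ge hy.2⟩
  have hzS : z ∈ S := ⟨hz, hfz⟩
  have hlt : sInf S < y₀ := (csInf_le hbdd hzS).trans_lt hz
  have hleft : ∀ x < sInf S, 0 < f x := fun x hx =>
    lt_of_not_ge fun hfx => (csInf_le hbdd ⟨hx.trans hlt, hfx⟩).not_gt hx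
  have hcont := hf _ hlt
  have hle : f (sInf S) ≤ 0 := by
    have := mem_closure_iff_nhdsWithin_neBot.1 (csInf_mem_closure ⟨z, hzS⟩ hbdd)
    exact le_of_tendsto hcont.continuousWithinAt
      (eventually_nhdsWithin_of_forall fun y (hy : y ∈ S) => hy.2)
  have hge : 0 ≤ f (sInf S) :=
    ge_of_tendsto hcont.continuousWithinAt
      (eventually_nhdsWithin_of_forall (s := Iio _) fun x hx => (hleft x hx).le)
  exact hno_first_zero _ hlt hleft (le_antisymm hle hge)

lemma pos_of_hasDerivAt_mul {f g : ℝ → ℝ} {a b : ℝ} (hab : a < b)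
    (hder : ∀ x ∈ Icc a b, HasDerivAt f (f x * g x) x) (hg : ContinuousOn g (Icc a b))
    (hpos : ∀ x ∈ Ico a b, 0 < f x) : 0 < f b := by
  obtain ⟨K, hK⟩ := isCompact_Icc.exists_bound_of_continuousOn hg
  -- `(f e^{K x})' = f e^{K x} (g + K) ≥ 0` while `f > 0`, since `|g| ≤ K`.
  have hmono : MonotoneOn (fun x => f x * exp (K * x)) (Icc a b) := by
    refine monotoneOn_of_hasDerivWithinAt_nonneg (convex_Icc a b)
      (f' := fun x => f x * g x * exp (K * x) + f x * (exp (K * x) * (K * 1)))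
      (fun x hx => ((hder x hx).continuousAt.mul (by fun_prop)).continuousWithinAt)
      (fun x hx => ?_) (fun x hx => ?_) <;> rw [interior_Icc] at hx
    · exact ((hder x (Ioo_subset_Icc_self hx)).mul
        ((hasDerivAt_id x).const_mul K).exp).hasDerivWithinAt
    · have hgK : -K ≤ g x := neg_le_of_abs_le (hK x (Ioo_subset_Icc_self hx))
      have hfx := hpos x (Ioo_subset_Ico_self hx)
      have : 0 ≤ f x * exp (K * x) * (g x + K) :=
        mul_nonneg (by positivity) (by linarith)
      linarith
  have := hmono (left_mem_Icc.2 hab.le) (right_mem_Icc.2 hab.le) hab.le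
  have hfa := hpos a (left_mem_Ico.2 hab)
  simp only at this
  exact pos_of_mul_pos_left ((by positivity : 0 < f a * exp (K * a)).trans_le this)
    (exp_pos _).le

lemma forall_pos_of_hasDerivAt_mul {f g : ℝ → ℝ} {y₀ : ℝ}
    (hder : ∀ x < y₀, HasDerivAt f (f x * g x) x) (hg : ∀ x < y₀, ContinuousAt g x)
    (hev : ∀ᶠ y in atBot, 0 < f y) : ∀ y < y₀, 0 < f y := by
  refine forall_pos_of_eventually_pos (fun y hy => (hder y hy).continuousAt) hev
    fun y₁ hy₁ hleft => (pos_of_hasDerivAt_mul (g := g) (sub_one_lt y₁) ?_ ?_ ?_).ne'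
  · exact fun x hx => hder x (hx.2.trans_lt hy₁)
  · exact fun x hx => (hg x (hx.2.trans_lt hy₁)).continuousWithinAt
  · exact fun x hx => hleft x hx.2

lemma HasDerivAt.nonneg_of_forall_lt_le {f : ℝ → ℝ} {f' b : ℝ} (hf : HasDerivAt f f' b)
    (hle : ∀ x < b, f x ≤ f b) : 0 ≤ f' :=
  ge_of_tendsto (hasDerivAt_iff_tendsto_slope_left_right.1 hf).1 <|
    eventually_nhdsWithin_of_forall fun x (hx : x < b) => by
      rw [slope_def_field]
      exact div_nonneg_of_nonpos (sub_nonpos.2 (hle x hx)) (sub_nonpos.2 hx.le)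

lemma lt_of_eventually_lt_of_hasDerivAt_neg {v w : ℝ → ℝ} {y C : ℝ}
    (hv : ∀ x ≤ y, HasDerivAt v (w x) x) (hw : ∀ x < y, w x < 0)
    (hev : ∀ᶠ x in atBot, v x < C) : v y < C := by
  obtain ⟨b, hbC, hby⟩ := (hev.and (eventually_lt_atBot y)).exists
  have hanti : StrictAntiOn v (Iic y) := by
    refine strictAntiOn_of_hasDerivWithinAt_neg (f' := w) (convex_Iic y)
      (fun x hx => (hv x hx).continuousAt.continuousWithinAt) (fun x hx => ?_) (fun x hx => ?_)
      <;> rw [interior_Iic] at hx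
    · exact (hv x hx.le).hasDerivWithinAt
    · exact hw x hx
  exact (hanti hby.le (mem_Iic.2 le_rfl) hby).trans hbC

/-- Invariance of the region D: if v stays positive on (-∞, y₀), then the
solution on the unstable manifold stays in D = {0 < u < 1, 0 < v < 1, w < 0}. -/
theorem statement9 (d r c α : ℝ) (hd : 1 < d) (hr : 0 < r) (hc : 0 < c) (hα : 0 < α)
    (lam μ η : ℝ) (hlam : lam = (-c + Real.sqrt (c ^ 2 + 4 * r)) / 2)
    (hmu : μ = (d - 1) / c) (heta : η = min lam μ)
    (y₀ : ℝ) (u v w : ℝ → ℝ)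
    (hsol : SolvesOde3 d r c u v w (Set.Iio y₀))
    (hasym : UnstableAsym lam μ η α u v w)
    (hv : ∀ y < y₀, 0 < v y) :
    ∀ y < y₀, 0 < u y ∧ u y < 1 ∧ 0 < v y ∧ v y < 1 ∧ w y < 0 := by
  have hlam0 : 0 < lam := by
    have : c < √(c ^ 2 + 4 * r) := (lt_sqrt hc.le).2 (by linarith)
    linarith
  have hmu0 : 0 < μ := hmu ▸ div_pos (by linarith) hc
  have hev := hasym.eventually_bounds hα hlam0 hmu0 (heta ▸ lt_min hlam0 hmu0)
  have hu_cont : ∀ y < y₀, ContinuousAt u y := fun y hy => (hsol y hy).1.continuousAt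
  have hv_cont : ∀ y < y₀, ContinuousAt v y := fun y hy => (hsol y hy).2.1.continuousAt
  have hu_pos : ∀ y < y₀, 0 < u y :=
    forall_pos_of_hasDerivAt_mul (g := fun y => -((1 - u y) * (1 - u y - d * v y)) / c)
      (fun y hy => (hsol y hy).1.congr_deriv (by ring))
      (fun y hy => by have := hu_cont y hy; have := hv_cont y hy; fun_prop)
      (hev.mono fun y hy => hy.1)
  have hu_lt : ∀ y < y₀, 0 < 1 - u y :=
    forall_pos_of_hasDerivAt_mul (f := fun y => 1 - u y)
      (g := fun y => u y * (1 - u y - d * v y) / c)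
      (fun y hy => ((hsol y hy).1.const_sub 1).congr_deriv (by ring))
      (fun y hy => by have := hu_cont y hy; have := hv_cont y hy; fun_prop)
      (hev.mono fun y hy => sub_pos.2 hy.2.1)
  have hw_neg : ∀ y < y₀, 0 < -w y := by
    refine forall_pos_of_eventually_pos (fun y hy => (hsol y hy).2.2.continuousAt.neg)
      (hev.mono fun y hy => neg_pos.2 hy.2.2.2) fun y₁ hy₁ hleft hzero => ?_
    have hw₁ : w y₁ = 0 := neg_eq_zero.1 hzero
    have hv₁ : v y₁ < 1 :=
      lt_of_eventually_lt_of_hasDerivAt_neg (fun x hx => (hsol x (hx.trans_lt hy₁)).2.1)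
        (fun x hx => neg_pos.1 (hleft x hx)) (hev.mono fun y hy => hy.2.2.1)
    have hw'_nonneg := (hsol y₁ hy₁).2.2.nonneg_of_forall_lt_le
      fun x hx => hw₁ ▸ (neg_pos.1 (hleft x hx)).le
    have := mul_pos (mul_pos (mul_pos hr (hv y₁ hy₁)) (hu_lt y₁ hy₁)) (sub_pos.2 hv₁)
    rw [hw₁] at hw'_nonneg
    linarith
  have hv_lt : ∀ y < y₀, v y < 1 := fun y hy =>
    lt_of_eventually_lt_of_hasDerivAt_neg (fun x hx => (hsol x (hx.trans_lt hy)).2.1)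
      (fun x hx => neg_pos.1 (hw_neg x (hx.trans hy))) (hev.mono fun y hy => hy.2.2.1)
  intro y hy
  exact ⟨hu_pos y hy, sub_pos.1 (hu_lt y hy), hv y hy, hv_lt y hy, neg_pos.1 (hw_neg y hy)⟩
end

section
/- Let r > 0 and 0 < c < 2√r. There is no pair of C² functions (u, v) defined on an interval [a, +∞) such that v''(y) + c v'(y) + r v(y)(1 − u(y))(1 − v(y)) = 0 on [a, +∞), 0 ≤ u(y) < 1 and 0 < v(y) < 1 for all y ≥ a, and u(y) → 0, v(y) → 0 as y → +∞. (By Sturm comparison with the constant-coefficient equation v'' + c v' + r(1−ε)² v = 0, which oscillates when c < 2√r(1−ε), the function v would have to vanish, a contradiction.) -/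
/-!
Sturm comparison. Fix `ω > 0` with `c²/4 + ω² < r`. The damped sine
`φ(z) = e^{-c(z-α)/2} sin(ω(z-α))` solves `φ'' + cφ' + (c²/4 + ω²)φ = 0`, is nonnegative on
`[α, β]`, `β = α + π/ω`, and vanishes at both ends. Since `u, v → 0`, the potential `r(1-u)(1-v)` of the
`v`-equation exceeds `c²/4 + ω²` on some half-line `[α, ∞)`, and there the weighted Wronskian
`e^{cz}(φ'v - φv')` is nondecreasing as long as `v > 0`. Its values `e^{cα}ω v(α) > 0` and
`e^{cβ}φ'(β)v(β) < 0` at the two ends of the hump force `v` to have a nonpositive value in between.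
-/

open Filter Topology Real Set

theorem ContDiffOn.hasDerivAt_derivWithin {𝕜 F : Type*} [NontriviallyNormedField 𝕜]
    [NormedAddCommGroup F] [NormedSpace 𝕜 F] {f : 𝕜 → F} {s : Set 𝕜} {n : WithTop ℕ∞} {x : 𝕜}
    (hf : ContDiffOn 𝕜 n f s) (hn : n ≠ 0) (hs : s ∈ 𝓝 x) :
    HasDerivAt f (derivWithin f s x) x := by
  rw [derivWithin_of_mem_nhds hs]
  exact (hf.differentiableOn hn).hasDerivAt hs

theorem hasDerivAt_exp_mul_wronskian {c p q x : ℝ} {φ φ' v v' : ℝ → ℝ}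
    (hφ : HasDerivAt φ (φ' x) x) (hφ' : HasDerivAt φ' (-(c * φ' x) - p * φ x) x)
    (hv : HasDerivAt v (v' x) x) (hv' : HasDerivAt v' (-(c * v' x) - q * v x) x) :
    HasDerivAt (fun z => exp (c * z) * (φ' z * v z - φ z * v' z))
      (exp (c * x) * ((q - p) * (φ x * v x))) x := by
  have hexp : HasDerivAt (fun z => exp (c * z)) (exp (c * x) * c) x := by
    simpa using ((hasDerivAt_id x).const_mul c).exp
  exact (hexp.fun_mul ((hφ'.fun_mul hv).fun_sub (hφ.fun_mul hv'))).congr_deriv (by ring)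

theorem exists_nonpos_of_sturm_comparison {c α β : ℝ} {p q φ φ' v v' : ℝ → ℝ} (hαβ : α ≤ β)
    (hφ : ∀ x ∈ Icc α β, HasDerivAt φ (φ' x) x)
    (hφ' : ∀ x ∈ Icc α β, HasDerivAt φ' (-(c * φ' x) - p x * φ x) x)
    (hv : ∀ x ∈ Icc α β, HasDerivAt v (v' x) x)
    (hv' : ∀ x ∈ Icc α β, HasDerivAt v' (-(c * v' x) - q x * v x) x)
    (hpq : ∀ x ∈ Icc α β, p x ≤ q x) (hφ_nonneg : ∀ x ∈ Icc α β, 0 ≤ φ x)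
    (hφα : φ α = 0) (hφβ : φ β = 0) (hφ'α : 0 < φ' α) (hφ'β : φ' β < 0) :
    ∃ x ∈ Icc α β, v x ≤ 0 := by
  by_contra! hv_pos
  set W : ℝ → ℝ := fun z => exp (c * z) * (φ' z * v z - φ z * v' z)
  have hW : ∀ x ∈ Icc α β, HasDerivAt W (exp (c * x) * ((q x - p x) * (φ x * v x))) x :=
    fun x hx => hasDerivAt_exp_mul_wronskian (hφ x hx) (hφ' x hx) (hv x hx) (hv' x hx)
  have hW_mono : MonotoneOn W (Icc α β) := by
    refine monotoneOn_of_hasDerivWithinAt_nonneg (convex_Icc α β)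
      (fun x hx => (hW x hx).continuousAt.continuousWithinAt)
      (fun x hx => (hW x (interior_subset hx)).hasDerivWithinAt) fun x hx => ?_
    have hx := interior_subset hx
    have := hpq x hx
    have := hφ_nonneg x hx
    have := hv_pos x hx
    positivity
  have hWα : 0 < W α := by
    have := hv_pos α (left_mem_Icc.2 hαβ)
    simp only [W, hφα, zero_mul, sub_zero]
    positivity
  have hWβ : W β < 0 := by
    have := hv_pos β (right_mem_Icc.2 hαβ)
    simp only [W, hφβ, zero_mul, sub_zero]
    exact mul_neg_of_pos_of_neg (exp_pos _) (mul_neg_of_neg_of_pos hφ'β this)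
  linarith [hW_mono (left_mem_Icc.2 hαβ) (right_mem_Icc.2 hαβ) hαβ]

theorem hasDerivAt_const_mul_sub_const (k a x : ℝ) : HasDerivAt (fun z => k * (z - a)) k x := by
  simpa using ((hasDerivAt_id x).sub_const a).const_mul k

noncomputable def dampedSine (c ω α z : ℝ) : ℝ :=
  exp (-(c / 2) * (z - α)) * sin (ω * (z - α))

noncomputable def dampedSineDeriv (c ω α z : ℝ) : ℝ :=
  exp (-(c / 2) * (z - α)) * (ω * cos (ω * (z - α)) - c / 2 * sin (ω * (z - α)))

section DampedSine

variable (c ω α : ℝ)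

theorem hasDerivAt_dampedSine (x : ℝ) :
    HasDerivAt (dampedSine c ω α) (dampedSineDeriv c ω α x) x := by
  have hlin (k : ℝ) := hasDerivAt_const_mul_sub_const k α x
  exact ((hlin (-(c / 2))).exp.fun_mul (hlin ω).sin).congr_deriv (by rw [dampedSineDeriv]; ring)

theorem hasDerivAt_dampedSineDeriv (x : ℝ) :
    HasDerivAt (dampedSineDeriv c ω α)
      (-(c * dampedSineDeriv c ω α x) - (c ^ 2 / 4 + ω ^ 2) * dampedSine c ω α x) x := by
  have hlin (k : ℝ) := hasDerivAt_const_mul_sub_const k α x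
  exact ((hlin (-(c / 2))).exp.fun_mul
    (((hlin ω).cos.const_mul ω).fun_sub ((hlin ω).sin.const_mul (c / 2)))).congr_deriv
    (by rw [dampedSine, dampedSineDeriv]; ring)

variable {ω}

theorem mul_add_pi_div_sub (hω : ω ≠ 0) : ω * (α + π / ω - α) = π := by
  field_simp
  ring

theorem dampedSine_nonneg (hω : 0 < ω) {x : ℝ} (hx : x ∈ Icc α (α + π / ω)) :
    0 ≤ dampedSine c ω α x := by
  refine mul_nonneg (exp_nonneg _) (sin_nonneg_of_nonneg_of_le_pi ?_ ?_)
  · exact mul_nonneg hω.le (by linarith [hx.1])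
  · rw [← mul_add_pi_div_sub α hω.ne']
    exact mul_le_mul_of_nonneg_left (by linarith [hx.2]) hω.le

theorem dampedSine_add_pi_div (hω : ω ≠ 0) : dampedSine c ω α (α + π / ω) = 0 := by
  rw [dampedSine, mul_add_pi_div_sub α hω, sin_pi, mul_zero]

theorem dampedSineDeriv_add_pi_div_neg (hω : 0 < ω) :
    dampedSineDeriv c ω α (α + π / ω) < 0 := by
  simp only [dampedSineDeriv, mul_add_pi_div_sub α hω.ne', cos_pi, sin_pi]
  nlinarith [exp_pos (-(c / 2) * (α + π / ω - α))]

end DampedSine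

theorem exists_nonpos_of_potential_ge {c ω α : ℝ} {q v v' : ℝ → ℝ} (hω : 0 < ω)
    (hv : ∀ x ∈ Icc α (α + π / ω), HasDerivAt v (v' x) x)
    (hv' : ∀ x ∈ Icc α (α + π / ω), HasDerivAt v' (-(c * v' x) - q x * v x) x)
    (hq : ∀ x ∈ Icc α (α + π / ω), c ^ 2 / 4 + ω ^ 2 ≤ q x) :
    ∃ x ∈ Icc α (α + π / ω), v x ≤ 0 :=
  exists_nonpos_of_sturm_comparison (p := fun _ => c ^ 2 / 4 + ω ^ 2)
    (le_add_of_nonneg_right (div_pos pi_pos hω).le)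
    (fun x _ => hasDerivAt_dampedSine c ω α x) (fun x _ => hasDerivAt_dampedSineDeriv c ω α x)
    hv hv' hq (fun _ hx => dampedSine_nonneg c α hω hx) (by simp [dampedSine])
    (dampedSine_add_pi_div c α hω.ne') (by simpa [dampedSineDeriv] using hω)
    (dampedSineDeriv_add_pi_div_neg c α hω)

theorem statement14_general (r c : ℝ) (hc0 : 0 < c) (hc : c < 2 * Real.sqrt r) :
    ¬ ∃ (a : ℝ) (u v : ℝ → ℝ),
      ContDiffOn ℝ 2 u (Set.Ici a) ∧ ContDiffOn ℝ 2 v (Set.Ici a) ∧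
      (∀ y ∈ Set.Ici a,
        derivWithin (derivWithin v (Set.Ici a)) (Set.Ici a) y
          + c * derivWithin v (Set.Ici a) y + r * v y * (1 - u y) * (1 - v y) = 0) ∧
      (∀ y ∈ Set.Ici a, 0 ≤ u y ∧ u y < 1 ∧ 0 < v y ∧ v y < 1) ∧
      Tendsto u atTop (𝓝 0) ∧ Tendsto v atTop (𝓝 0) := by
  rintro ⟨a, u, v, -, hv, hode, hbnd, hu, hv0⟩
  have hr : 0 < r := sqrt_pos.1 (by linarith)
  have hcr : c ^ 2 / 4 < r := by nlinarith [sq_sqrt hr.le]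
  set ω := √((r - c ^ 2 / 4) / 2)
  have hω : 0 < ω := sqrt_pos.2 (by linarith)
  have hω_sq : c ^ 2 / 4 + ω ^ 2 < r := by rw [sq_sqrt (by linarith)]; linarith
  set q : ℝ → ℝ := fun y => r * (1 - u y) * (1 - v y)
  have hq : Tendsto q atTop (𝓝 r) := by
    simpa using ((tendsto_const_nhds (x := (1 : ℝ)).sub hu).const_mul r).mul
      (tendsto_const_nhds (x := (1 : ℝ)).sub hv0)
  obtain ⟨α, hα⟩ := eventually_atTop.1
    ((hq.eventually (eventually_gt_nhds hω_sq)).and (eventually_gt_atTop a))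
  have hIcc_nhds {x : ℝ} (hx : x ∈ Icc α (α + π / ω)) : Ici a ∈ 𝓝 x :=
    Ici_mem_nhds ((hα α le_rfl).2.trans_le hx.1)
  have hv' := hv.derivWithin (uniqueDiffOn_Ici a) (m := 1) (by norm_num)
  obtain ⟨x, hx, hvx⟩ := exists_nonpos_of_potential_ge (q := q) hω
    (fun x hx => hv.hasDerivAt_derivWithin two_ne_zero (hIcc_nhds hx))
    (fun x hx => (hv'.hasDerivAt_derivWithin one_ne_zero (hIcc_nhds hx)).congr_deriv
      (by linear_combination hode x (mem_of_mem_nhds (hIcc_nhds hx))))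
    (fun x hx => (hα x hx.1).1.le)
  exact (hbnd x (mem_of_mem_nhds (hIcc_nhds hx))).2.2.1.not_ge hvx

/-- In the weakly damped regime 0 < c < 2√r, there is no C² pair (u, v) on
[a, ∞) with v'' + c v' + r v (1-u)(1-v) = 0, 0 ≤ u < 1 and 0 < v < 1, such
that both u and v tend to 0 at +∞ (Sturm comparison argument). -/
theorem statement14 (r c : ℝ) (hr : 0 < r) (hc0 : 0 < c) (hc : c < 2 * Real.sqrt r) :
    ¬ ∃ (a : ℝ) (u v : ℝ → ℝ),
      ContDiffOn ℝ 2 u (Set.Ici a) ∧ ContDiffOn ℝ 2 v (Set.Ici a) ∧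
      (∀ y ∈ Set.Ici a,
        derivWithin (derivWithin v (Set.Ici a)) (Set.Ici a) y
          + c * derivWithin v (Set.Ici a) y + r * v y * (1 - u y) * (1 - v y) = 0) ∧
      (∀ y ∈ Set.Ici a, 0 ≤ u y ∧ u y < 1 ∧ 0 < v y ∧ v y < 1) ∧
      Tendsto u atTop (𝓝 0) ∧ Tendsto v atTop (𝓝 0) :=
  statement14_general r c hc0 hc
end
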